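/- arXiv:math/0501278 — 4 statements merged into one kernel-verified Lean document; each statement's English description precedes it below -/
import Mathlib

section
/- Let 𝔅₁, 𝔅₂ be quasipoints of a lattice L, and let E ∈ 𝔅₁ ∩ 𝔅₂. If the E-trunks coincide, i.e., {F ∈ 𝔅₁ | F ≤ E} = {F ∈ 𝔅₂ | F ≤ E}, then 𝔅₁ = 𝔅₂. -/
/-- A filter base in a bounded lattice: `⊥ ∉ B` and any two elements of `B`
have a common lower bound in `B`. -/
def IsLatticeFilterBase {L : Type*} [Lattice L] [BoundedOrder L] (B : Set L) : Prop :=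
  ⊥ ∉ B ∧ ∀ a ∈ B, ∀ b ∈ B, ∃ c ∈ B, c ≤ a ⊓ b

/-- A quasipoint of a bounded lattice: a maximal filter base. -/
def IsQuasipoint {L : Type*} [Lattice L] [BoundedOrder L] (B : Set L) : Prop :=
  IsLatticeFilterBase B ∧ ∀ C : Set L, IsLatticeFilterBase C → B ⊆ C → C = B

/-- The `E`-trunk `{F ∈ 𝔅 | F ≤ E}` uniquely determines the quasipoint. -/
theorem trunk_determines_quasipoint {L : Type*} [Lattice L] [BoundedOrder L]
    (B₁ B₂ : Set L) (hB₁ : IsQuasipoint B₁) (hB₂ : IsQuasipoint B₂)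
    (E : L) (hE₁ : E ∈ B₁) (hE₂ : E ∈ B₂)
    (htrunk : {F ∈ B₁ | F ≤ E} = {F ∈ B₂ | F ≤ E}) :
    B₁ = B₂ := by
  obtain ⟨⟨hbot₁, hmeet₁⟩, hmax₁⟩ := hB₁
  obtain ⟨⟨hbot₂, hmeet₂⟩, hmax₂⟩ := hB₂
  -- key: mixed pairs have a common lower bound in B₂
  have key : ∀ a ∈ B₁, ∀ b ∈ B₂, ∃ c ∈ B₂, c ≤ a ⊓ b := by
    intro a ha b hb
    obtain ⟨a', ha', ha'le⟩ := hmeet₁ a ha E hE₁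
    have ha'E : a' ≤ E := ha'le.trans inf_le_right
    have ha'B₂ : a' ∈ B₂ := by
      have : a' ∈ {F ∈ B₂ | F ≤ E} := htrunk ▸ ⟨ha', ha'E⟩
      exact this.1
    obtain ⟨c, hc, hcle⟩ := hmeet₂ a' ha'B₂ b hb
    exact ⟨c, hc, le_inf ((hcle.trans inf_le_left).trans (ha'le.trans inf_le_left))
      (hcle.trans inf_le_right)⟩
  have hU : IsLatticeFilterBase (B₁ ∪ B₂) := by
    constructor
    · rintro (h | h)
      exacts [hbot₁ h, hbot₂ h]
    · rintro a (ha | ha) b (hb | hb)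
      · obtain ⟨c, hc, h⟩ := hmeet₁ a ha b hb; exact ⟨c, Or.inl hc, h⟩
      · obtain ⟨c, hc, h⟩ := key a ha b hb; exact ⟨c, Or.inr hc, h⟩
      · obtain ⟨c, hc, h⟩ := key b hb a ha
        exact ⟨c, Or.inr hc, h.trans (by simp [inf_comm])⟩
      · obtain ⟨c, hc, h⟩ := hmeet₂ a ha b hb; exact ⟨c, Or.inr hc, h⟩
  have h1 := hmax₁ _ hU Set.subset_union_left
  have h2 := hmax₂ _ hU Set.subset_union_right
  exact h1.symm.trans h2
end

section
/- Let A be a commutative unital C*-algebra and a ∈ A^n such that E_a : b ↦ a(a|b) is idempotent (E_a² = E_a). Then (a|a) is a projection in A. -/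
open scoped BigOperators

variable {A : Type*} [NormedCommRing A] [StarRing A] [CStarRing A]
  [NormedAlgebra ℂ A] [StarModule ℂ A] [CompleteSpace A] {n : ℕ}

/-- The `A`-valued inner product on the Hilbert `A`-module `A^n`,
`(a|b) = ∑ k, a_k* b_k`, `A`-linear in the second variable. -/
def minner {A : Type*} [NormedCommRing A] [StarRing A] {n : ℕ}
    (a b : Fin n → A) : A := ∑ k, star (a k) * b k

/-- The ket-bra operator `E_a : b ↦ a (a|b)` on `A^n`. -/
def Ea {A : Type*} [NormedCommRing A] [StarRing A] {n : ℕ}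
    (a : Fin n → A) (b : Fin n → A) : Fin n → A :=
  fun j => a j * minner a b

/-- If `E_a` is idempotent, then `(a|a)` is a projection in `A`. -/
theorem inner_self_proj_of_Ea_idem (a : Fin n → A)
    (h : ∀ b : Fin n → A, Ea a (Ea a b) = Ea a b) :
    IsSelfAdjoint (minner a a) ∧ IsIdempotentElem (minner a a) := by
  set s := minner a a with hs
  have hsa : IsSelfAdjoint s := by
    simp only [IsSelfAdjoint, hs, minner, star_sum, star_mul, star_star]

  have hmin : ∀ b, minner a (Ea a b) = s * minner a b := by
    intro b
    simp only [minner, Ea, hs, ← mul_assoc, ← Finset.sum_mul]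
  have h3 : s * (s * s) = s * s := by
    have := congrArg (minner a) (h a)
    rwa [hmin, hmin, ← hs] at this
  have hd : (s * s - s) * (s * s - s) = 0 := by linear_combination (s - 1) * h3
  have hdsa : star (s * s - s) = s * s - s := by
    rw [star_sub, star_mul, hsa.star_eq, mul_comm]
  have hnorm : ‖s * s - s‖ * ‖s * s - s‖ = 0 := by
    rw [← CStarRing.norm_star_mul_self, hdsa, hd, norm_zero]
  have hzero : s * s - s = 0 := by
    rcases mul_self_eq_zero.mp hnorm with h0
    exact norm_eq_zero.mp h0
  exact ⟨hsa, sub_eq_zero.mp hzero⟩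
end

section
/- Let A be a commutative unital C*-algebra and a ∈ A^n with (a|a) a projection. Then E_a is an abelian projection in M_n(A): for all A-linear maps S, T on A^n (equivalently matrices in M_n(A)), E_a S E_a T E_a = E_a T E_a S E_a. -/
open scoped BigOperators

variable {A : Type*} [NormedCommRing A] [StarRing A] [CStarRing A]
  [NormedAlgebra ℂ A] [StarModule ℂ A] [CompleteSpace A] {n : ℕ}

private lemma minner_mulVec_Ea {A : Type*} [NormedCommRing A] [StarRing A] {n : ℕ}
    (a : Fin n → A) (S : Matrix (Fin n) (Fin n) A) (w : Fin n → A) :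
    minner a (S.mulVec (Ea a w)) =
      (∑ k, ∑ i, star (a k) * S k i * a i) * minner a w := by
  show ∑ k, star (a k) * ∑ i, S k i * (a i * minner a w) = _
  generalize minner a w = m
  rw [Finset.sum_mul]
  refine Finset.sum_congr rfl fun k _ => ?_
  rw [Finset.mul_sum, Finset.sum_mul]
  exact Finset.sum_congr rfl fun i _ => by ring

/-- If `(a|a)` is a projection, then `E_a` is an abelian projection in `Mₙ(A)`:
`E_a S E_a T E_a = E_a T E_a S E_a` for all matrices `S, T ∈ Mₙ(A)`. -/
theorem Ea_abelian (a : Fin n → A)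
    (hsa : IsSelfAdjoint (minner a a)) (hidem : IsIdempotentElem (minner a a)) :
    ∀ (S T : Matrix (Fin n) (Fin n) A) (b : Fin n → A),
      Ea a (S.mulVec (Ea a (T.mulVec (Ea a b)))) =
        Ea a (T.mulVec (Ea a (S.mulVec (Ea a b)))) := by
  intro S T b
  funext j
  simp only [Ea, minner_mulVec_Ea]
  ring
end

section
/- Let A be a commutative unital C*-algebra and a ∈ A^n with (a|a) a projection. Then the central carrier of E_a in M_n(A) equals the central projection I_n·(a|a): (i) E_a (b·(a|a)) = E_a b for all b ∈ A^n, so (a|a)·E_a = E_a; and (ii) for every projection q ∈ A with q·E_a = E_a one has (a|a) ≤ q. -/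
open scoped BigOperators

variable {A : Type*} [NormedCommRing A] [StarRing A] [CStarRing A]
  [NormedAlgebra ℂ A] [StarModule ℂ A] [CompleteSpace A] {n : ℕ}

/-- If `(a|a)` is a projection, then `a_j (a|a) = a_j` for every coordinate. -/
lemma mul_minner_self (a : Fin n → A)
    (hsa : IsSelfAdjoint (minner a a)) (hidem : IsIdempotentElem (minner a a))
    (j : Fin n) : a j * minner a a = a j := by
  letI : CommCStarAlgebra A := { }
  letI := CStarAlgebra.spectralOrder A
  haveI := CStarAlgebra.spectralOrderedRing A
  set p := minner a a with hp
  have hterm : ∀ k : Fin n, star (a k - a k * p) * (a k - a k * p)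
      = star (a k) * a k - (star (a k) * a k) * p := by
    intro k
    have hsp : star p = p := hsa
    have h2 : p * p = p := hidem
    simp only [star_sub, star_mul, hsp]
    ring_nf
    rw [sq, h2]
    ring
  have hsum : ∑ k, star (a k - a k * p) * (a k - a k * p) = 0 := by
    calc ∑ k, star (a k - a k * p) * (a k - a k * p)
        = ∑ k, (star (a k) * a k - (star (a k) * a k) * p) :=
          Finset.sum_congr rfl fun k _ => hterm k
      _ = p - p * p := by
          rw [Finset.sum_sub_distrib, ← Finset.sum_mul]
          rw [hp, minner]
      _ = 0 := by rw [hidem]; simp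
  have hnn : ∀ k ∈ Finset.univ, (0 : A) ≤ star (a k - a k * p) * (a k - a k * p) :=
    fun k _ => star_mul_self_nonneg _
  have hzero := (Finset.sum_eq_zero_iff_of_nonneg hnn).mp hsum j (Finset.mem_univ j)
  have hj := (CStarRing.star_mul_self_eq_zero_iff _).mp hzero
  linear_combination -hj

/-- The central carrier of `E_a` is `Iₙ (a|a)`: `(a|a) E_a = E_a`, and any central
projection `q` with `q E_a = E_a` dominates `(a|a)`. -/
theorem Ea_central_carrier (a : Fin n → A)
    (hsa : IsSelfAdjoint (minner a a)) (hidem : IsIdempotentElem (minner a a)) :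
    (∀ b : Fin n → A, Ea a (fun k => b k * minner a a) = Ea a b) ∧
      (∀ (b : Fin n → A) (k : Fin n), Ea a b k * minner a a = Ea a b k) ∧
      ∀ q : A, IsSelfAdjoint q → IsIdempotentElem q →
        (∀ b : Fin n → A, (fun k => q * Ea a b k) = Ea a b) →
        minner a a * q = minner a a := by
  have hkey := mul_minner_self a hsa hidem
  refine ⟨?_, ?_, ?_⟩
  · intro b
    funext j
    simp only [Ea, minner]
    rw [Finset.mul_sum, Finset.mul_sum]
    congr 1
    funext k
    calc a j * (star (a k) * (b k * minner a a))
        = star (a k) * b k * (a j * minner a a) := by ring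
      _ = a j * (star (a k) * b k) := by rw [hkey j]; ring
  · intro b k
    simp only [Ea]
    calc a k * minner a b * minner a a = a k * minner a a * minner a b := by ring
      _ = a k * minner a b := by rw [hkey k]
  · intro q _ _ hq
    have hcoord : ∀ j k : Fin n, q * (a k * star (a j)) = a k * star (a j) := by
      intro j k
      have := congrFun (hq (fun i => if i = j then 1 else 0)) k
      simp only [Ea, minner] at this
      have hinner : ∑ i, star (a i) * (if i = j then (1:A) else 0) = star (a j) := by
        simp [Finset.sum_ite_eq']
      rw [hinner] at this
      exact this
    have : q * minner a a = minner a a := by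
      rw [minner, Finset.mul_sum]
      refine Finset.sum_congr rfl fun k _ => ?_
      have := hcoord k k
      calc q * (star (a k) * a k) = q * (a k * star (a k)) := by ring
        _ = a k * star (a k) := this
        _ = star (a k) * a k := by ring
    rw [mul_comm]
    exact this
end
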